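/- arXiv:2312.17182 — 2 statements merged into one kernel-verified Lean document; each statement's English description precedes it below -/
import Mathlib

section
/- (1) The assignment x₁ ↦ x₂, x₂ ↦ x₁, x₃ ↦ x₃ extends to a K-algebra isomorphism A_{x₁x₂}(q, α, μ) → A_{x₁x₂}(q⁻¹, μ, α). (2) The assignment x₁ ↦ x₁⁻¹, x₂ ↦ x₂, x₃ ↦ x₃ extends to a K-algebra isomorphism A_{x₁x₂}(q, α, μ) → A_{x₁x₂}(q⁻¹, −α, μ). -/
noncomputable section

/-- The defining relations of `A(q,α,μ)` together with the PBW-basis property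
(for arbitrary parameters `α`, `μ`). -/
def IsBiQuadRel {K : Type*} [Field K] {A : Type*} [Ring A] [Algebra K A]
    (q α μ : K) (x₁ x₂ x₃ : A) : Prop :=
  x₂ * x₁ = algebraMap K A q * (x₁ * x₂) ∧
  x₃ * x₁ = x₁ * (x₃ + algebraMap K A α) ∧
  x₃ * x₂ = x₂ * (x₃ + algebraMap K A μ) ∧
  ∀ a : A, ∃! f : ℕ × ℕ × ℕ →₀ K,
    a = f.sum fun v c => c • (x₁ ^ v.1 * x₂ ^ v.2.1 * x₃ ^ v.2.2)

/-- `B` is the localization `A_{x₁x₂}`. -/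
def IsOreLoc {K : Type*} [Field K] {A : Type*} [Ring A] [Algebra K A]
    {B : Type*} [Ring B] [Algebra K B] (ι : A →ₐ[K] B)
    (x₁ x₂ : A) (y₁ y₂ : B) : Prop :=
  Function.Injective ι ∧
  ι x₁ * y₁ = 1 ∧ y₁ * ι x₁ = 1 ∧ ι x₂ * y₂ = 1 ∧ y₂ * ι x₂ = 1 ∧
  ∀ b : B, ∃ (a : A) (i j : ℕ), b * ι (x₁ ^ i * x₂ ^ j) = ι a

/-!
The Laurent monomials `x₁ ^ i * x₂ ^ j * x₃ ^ k` (`i j : ℤ`, `k : ℕ`) form a `K`-basis of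
`A_{x₁x₂}(q,α,μ)`. They span because every element is `a * x₂ ^ (-j) * x₁ ^ (-i)` with `a ∈ A`;
finitely many of them are independent because left multiplication by a suitable unit
`x₁ ^ N * x₂ ^ M` turns them, up to nonzero scalars, into PBW monomials of `A`. The product of two
Laurent monomials is given by a formula in `q, α, μ` only, so units `v₁, v₂` and an element `r`
of any `K`-algebra satisfying the relations of `A(q,α,μ)` receive an algebra map sending
`x₁, x₂, x₃` to `v₁, v₂, r`. Both `(x₂, x₁, x₃)` in `A_{x₁x₂}(q⁻¹,μ,α)` and `(x₁⁻¹, x₂, x₃)` in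
`A_{x₁x₂}(q⁻¹,-α,μ)` satisfy these relations, and so do the corresponding triples in the
opposite direction; the two maps so obtained are mutually inverse, as both composites fix the
generators.
-/

open Polynomial Module

section Relations

variable {K : Type*} [Field K] {R : Type*} [Ring R] [Algebra K R]

theorem mul_units_zpow_of_mul_eq_smul {a : Rˣ} {b : R} {c : K} (hc : c ≠ 0)
    (h : b * a = c • ((a : R) * b)) (n : ℤ) :
    b * ((a ^ n : Rˣ) : R) = c ^ n • (((a ^ n : Rˣ) : R) * b) := by
  have hinv : b * ((a⁻¹ : Rˣ) : R) = c⁻¹ • (((a⁻¹ : Rˣ) : R) * b) := by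
    rw [Units.mul_inv_eq_iff_eq_mul, smul_mul_assoc, mul_assoc, h, mul_smul_comm, smul_smul,
      inv_mul_cancel₀ hc, one_smul, Units.inv_mul_cancel_left]
  induction n using Int.induction_on with
  | zero => simp
  | succ n ih =>
    rw [zpow_add_one, Units.val_mul, ← mul_assoc, ih, smul_mul_assoc, mul_assoc, h,
      mul_smul_comm, smul_smul, ← mul_assoc, zpow_add_one₀ hc]
  | pred n ih =>
    rw [zpow_sub_one, Units.val_mul, ← mul_assoc, ih, smul_mul_assoc, mul_assoc, hinv,
      mul_smul_comm, smul_smul, ← mul_assoc, zpow_sub_one₀ hc]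

theorem add_algebraMap_mul_of_mul_eq {u s : R} {d : K} (h : s * u = u * (s + algebraMap K R d))
    (e : K) : (s + algebraMap K R e) * u = u * (s + algebraMap K R (d + e)) := by
  rw [add_mul, h, Algebra.commutes, map_add, ← add_assoc, mul_add _ _ (algebraMap K R e)]

theorem mul_units_zpow_of_mul_eq_mul_add {w : Rˣ} {s : R} {c : K}
    (h : s * w = w * (s + algebraMap K R c)) (n : ℤ) :
    s * ((w ^ n : Rˣ) : R) = ((w ^ n : Rˣ) : R) * (s + algebraMap K R (n • c)) := by
  have hinv : s * ((w⁻¹ : Rˣ) : R) = ((w⁻¹ : Rˣ) : R) * (s + algebraMap K R (-c)) := by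
    rw [Units.mul_inv_eq_iff_eq_mul, mul_assoc, add_algebraMap_mul_of_mul_eq h, add_neg_cancel,
      map_zero, add_zero, Units.inv_mul_cancel_left]
  induction n using Int.induction_on with
  | zero => simp
  | succ n ih =>
    rw [zpow_add_one, Units.val_mul, ← mul_assoc, ih, mul_assoc, add_algebraMap_mul_of_mul_eq h,
      ← mul_assoc, add_smul, one_smul, add_comm c]
  | pred n ih =>
    rw [zpow_sub_one, Units.val_mul, ← mul_assoc, ih, mul_assoc,
      add_algebraMap_mul_of_mul_eq hinv, ← mul_assoc, sub_smul, one_smul, sub_eq_neg_add]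

/-- The defining relations of `A(q,α,μ)` on the units `w₁`, `w₂` and on `s`, which play the roles
of `x₁`, `x₂`, `x₃`. -/
structure BiQuadUnitRel (q α μ : K) (w₁ w₂ : Rˣ) (s : R) : Prop where
  comm₁₂ : (w₂ : R) * w₁ = q • ((w₁ : R) * w₂)
  comm₁₃ : s * w₁ = w₁ * (s + algebraMap K R α)
  comm₂₃ : s * w₂ = w₂ * (s + algebraMap K R μ)

def laurentMonomial (w₁ w₂ : Rˣ) (s : R) (v : ℤ × ℤ × ℕ) : R :=
  ((w₁ ^ v.1 * w₂ ^ v.2.1 : Rˣ) : R) * s ^ v.2.2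

namespace BiQuadUnitRel

variable {q α μ : K} {w₁ w₂ : Rˣ} {s : R}

theorem swap (hq : q ≠ 0) (h : BiQuadUnitRel q α μ w₁ w₂ s) : BiQuadUnitRel q⁻¹ μ α w₂ w₁ s where
  comm₁₂ := by rw [h.comm₁₂, smul_smul, inv_mul_cancel₀ hq, one_smul]
  comm₁₃ := h.comm₂₃
  comm₂₃ := h.comm₁₃

theorem inv₁ (hq : q ≠ 0) (h : BiQuadUnitRel q α μ w₁ w₂ s) :
    BiQuadUnitRel q⁻¹ (-α) μ w₁⁻¹ w₂ s where
  comm₁₂ := by simpa using mul_units_zpow_of_mul_eq_smul hq h.comm₁₂ (-1)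
  comm₁₃ := by simpa using mul_units_zpow_of_mul_eq_mul_add h.comm₁₃ (-1)
  comm₂₃ := h.comm₂₃

theorem zpow_mul_zpow (hq : q ≠ 0) (h : BiQuadUnitRel q α μ w₁ w₂ s) (i j : ℤ) :
    ((w₂ ^ j : Rˣ) : R) * ((w₁ ^ i : Rˣ) : R) =
      q ^ (j * i) • (((w₁ ^ i : Rˣ) : R) * ((w₂ ^ j : Rˣ) : R)) := by
  have h₁ := mul_units_zpow_of_mul_eq_smul hq h.comm₁₂ i
  rw [← inv_smul_eq_iff₀ (zpow_ne_zero i hq), eq_comm] at h₁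
  rw [mul_units_zpow_of_mul_eq_smul (inv_ne_zero (zpow_ne_zero i hq)) h₁ j, smul_smul,
    inv_zpow, ← zpow_mul, mul_comm i j, mul_inv_cancel₀ (zpow_ne_zero _ hq), one_smul]

theorem pow_mul_units (h : BiQuadUnitRel q α μ w₁ w₂ s) (i j : ℤ) (k : ℕ) :
    s ^ k * ((w₁ ^ i * w₂ ^ j : Rˣ) : R) =
      ((w₁ ^ i * w₂ ^ j : Rˣ) : R) * (s + algebraMap K R (i • α + j • μ)) ^ k := by
  have hs : s * ((w₁ ^ i * w₂ ^ j : Rˣ) : R) =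
      ((w₁ ^ i * w₂ ^ j : Rˣ) : R) * (s + algebraMap K R (i • α + j • μ)) := by
    rw [Units.val_mul, ← mul_assoc, mul_units_zpow_of_mul_eq_mul_add h.comm₁₃, mul_assoc,
      add_algebraMap_mul_of_mul_eq (mul_units_zpow_of_mul_eq_mul_add h.comm₂₃ j), ← mul_assoc,
      add_comm (j • μ)]
  exact ((SemiconjBy.pow_right hs.symm k).eq).symm

theorem units_mul_units (hq : q ≠ 0) (h : BiQuadUnitRel q α μ w₁ w₂ s) (i j i' j' : ℤ) :
    ((w₁ ^ i * w₂ ^ j : Rˣ) : R) * ((w₁ ^ i' * w₂ ^ j' : Rˣ) : R) =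
      q ^ (j * i') • ((w₁ ^ (i + i') * w₂ ^ (j + j') : Rˣ) : R) := by
  simp only [Units.val_mul, mul_assoc]
  rw [← mul_assoc (w₂ ^ j : Rˣ).val, h.zpow_mul_zpow hq, smul_mul_assoc, mul_smul_comm]
  congr 1
  simp only [← Units.val_mul]
  congr 1
  group

theorem laurentMonomial_mul (hq : q ≠ 0) (h : BiQuadUnitRel q α μ w₁ w₂ s) (i j i' j' : ℤ)
    (k k' : ℕ) :
    laurentMonomial w₁ w₂ s (i, j, k) * laurentMonomial w₁ w₂ s (i', j', k') =
      q ^ (j * i') • (((w₁ ^ (i + i') * w₂ ^ (j + j') : Rˣ) : R) *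
        aeval s ((X + C (i' • α + j' • μ)) ^ k * X ^ k')) := by
  simp only [laurentMonomial, map_mul, map_pow, aeval_add, aeval_X, aeval_C]
  rw [mul_assoc, ← mul_assoc (s ^ k), pow_mul_units h, mul_assoc, ← mul_assoc,
    h.units_mul_units hq, smul_mul_assoc]

end BiQuadUnitRel

theorem units_mul_aeval (w₁ w₂ : Rˣ) (s : R) (i j : ℤ) (p : K[X]) :
    ((w₁ ^ i * w₂ ^ j : Rˣ) : R) * aeval s p =
      ∑ n ∈ Finset.range (p.natDegree + 1), p.coeff n • laurentMonomial w₁ w₂ s (i, j, n) := by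
  rw [aeval_eq_sum_range, Finset.mul_sum]
  simp only [mul_smul_comm, laurentMonomial]

end Relations

section LaurentPBW

variable {K : Type*} [Field K] {R : Type*} [Ring R] [Algebra K R]
  {C : Type*} [Ring C] [Algebra K C]

structure IsLaurentPBW (q α μ : K) (w₁ w₂ : Rˣ) (s : R) : Prop
    extends BiQuadUnitRel q α μ w₁ w₂ s where
  linearIndependent : LinearIndependent K (laurentMonomial w₁ w₂ s)
  span_eq_top : Submodule.span K (Set.range (laurentMonomial w₁ w₂ s)) = ⊤

theorem algHom_laurentMonomial (f : R →ₐ[K] C) (w₁ w₂ : Rˣ) (s : R) (v : ℤ × ℤ × ℕ) :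
    f (laurentMonomial w₁ w₂ s v) =
      laurentMonomial (Units.map f w₁) (Units.map f w₂) (f s) v := by
  rw [laurentMonomial, laurentMonomial, map_mul, map_pow, ← map_zpow, ← map_zpow, ← map_mul]
  rfl

namespace IsLaurentPBW

variable {q α μ : K} {w₁ w₂ : Rˣ} {s : R} {v₁ v₂ : Cˣ} {r : C}

def basis (h : IsLaurentPBW q α μ w₁ w₂ s) : Basis (ℤ × ℤ × ℕ) K R :=
  Basis.mk h.linearIndependent h.span_eq_top.ge

@[simp]
theorem basis_apply (h : IsLaurentPBW q α μ w₁ w₂ s) (v : ℤ × ℤ × ℕ) :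
    h.basis v = laurentMonomial w₁ w₂ s v :=
  Basis.mk_apply _ _ v

theorem constr_laurentMonomial (h : IsLaurentPBW q α μ w₁ w₂ s) (v : ℤ × ℤ × ℕ) :
    h.basis.constr K (laurentMonomial v₁ v₂ r) (laurentMonomial w₁ w₂ s v) =
      laurentMonomial v₁ v₂ r v := by
  rw [← h.basis_apply v, h.basis.constr_basis]

theorem constr_units_mul_aeval (h : IsLaurentPBW q α μ w₁ w₂ s) (i j : ℤ) (p : K[X]) :
    h.basis.constr K (laurentMonomial v₁ v₂ r) (((w₁ ^ i * w₂ ^ j : Rˣ) : R) * aeval s p) =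
      ((v₁ ^ i * v₂ ^ j : Cˣ) : C) * aeval r p := by
  simp only [units_mul_aeval, map_sum, map_smul, constr_laurentMonomial]

def lift (hq : q ≠ 0) (h : IsLaurentPBW q α μ w₁ w₂ s) (hC : BiQuadUnitRel q α μ v₁ v₂ r) :
    R →ₐ[K] C :=
  AlgHom.ofLinearMap (h.basis.constr K (laurentMonomial v₁ v₂ r))
    (by simpa [laurentMonomial] using h.constr_laurentMonomial (v₁ := v₁) (v₂ := v₂) (r := r) 0)
    (by
      rw [LinearMap.map_mul_iff]
      refine LinearMap.ext_basis h.basis h.basis fun ⟨i, j, k⟩ ⟨i', j', k'⟩ => ?_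
      simp only [LinearMap.compr₂_apply, LinearMap.mul_apply', LinearMap.compl₂_apply,
        LinearMap.comp_apply, basis_apply]
      rw [constr_laurentMonomial, constr_laurentMonomial, h.laurentMonomial_mul hq,
        hC.laurentMonomial_mul hq, map_smul, constr_units_mul_aeval])

theorem lift_laurentMonomial (hq : q ≠ 0) (h : IsLaurentPBW q α μ w₁ w₂ s)
    (hC : BiQuadUnitRel q α μ v₁ v₂ r) (v : ℤ × ℤ × ℕ) :
    h.lift hq hC (laurentMonomial w₁ w₂ s v) = laurentMonomial v₁ v₂ r v :=
  h.constr_laurentMonomial v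

theorem lift_units₁ (hq : q ≠ 0) (h : IsLaurentPBW q α μ w₁ w₂ s)
    (hC : BiQuadUnitRel q α μ v₁ v₂ r) : h.lift hq hC w₁ = v₁ := by
  simpa [laurentMonomial] using h.lift_laurentMonomial hq hC (1, 0, 0)

theorem lift_units₁_inv (hq : q ≠ 0) (h : IsLaurentPBW q α μ w₁ w₂ s)
    (hC : BiQuadUnitRel q α μ v₁ v₂ r) : h.lift hq hC ↑w₁⁻¹ = ↑v₁⁻¹ := by
  simpa [laurentMonomial] using h.lift_laurentMonomial hq hC (-1, 0, 0)

theorem lift_units₂ (hq : q ≠ 0) (h : IsLaurentPBW q α μ w₁ w₂ s)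
    (hC : BiQuadUnitRel q α μ v₁ v₂ r) : h.lift hq hC w₂ = v₂ := by
  simpa [laurentMonomial] using h.lift_laurentMonomial hq hC (0, 1, 0)

theorem lift_self (hq : q ≠ 0) (h : IsLaurentPBW q α μ w₁ w₂ s)
    (hC : BiQuadUnitRel q α μ v₁ v₂ r) : h.lift hq hC s = r := by
  simpa [laurentMonomial] using h.lift_laurentMonomial hq hC (0, 0, 1)

theorem algHom_ext (h : IsLaurentPBW q α μ w₁ w₂ s) {f g : R →ₐ[K] C} (h₁ : f w₁ = g w₁)
    (h₂ : f w₂ = g w₂) (hs : f s = g s) : f = g := by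
  refine AlgHom.toLinearMap_injective (h.basis.ext fun v => ?_)
  have hu : ∀ w : Rˣ, f w = g w → Units.map (f : R →* C) w = Units.map (g : R →* C) w :=
    fun w hw => Units.ext hw
  simp only [basis_apply, AlgHom.toLinearMap_apply, algHom_laurentMonomial,
    hu w₁ h₁, hu w₂ h₂, hs]

end IsLaurentPBW

end LaurentPBW

namespace IsOreLoc

variable {K : Type*} [Field K] {A : Type*} [Ring A] [Algebra K A] {B : Type*} [Ring B]
  [Algebra K B] {ι : A →ₐ[K] B} {x₁ x₂ : A} {y₁ y₂ : B}

def unit₁ (hB : IsOreLoc ι x₁ x₂ y₁ y₂) : Bˣ := ⟨ι x₁, y₁, hB.2.1, hB.2.2.1⟩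

def unit₂ (hB : IsOreLoc ι x₁ x₂ y₁ y₂) : Bˣ := ⟨ι x₂, y₂, hB.2.2.2.1, hB.2.2.2.2.1⟩

theorem laurentMonomial_natCast (hB : IsOreLoc ι x₁ x₂ y₁ y₂) (x₃ : A) (a b k : ℕ) :
    laurentMonomial hB.unit₁ hB.unit₂ (ι x₃) (a, b, k) = ι (x₁ ^ a * x₂ ^ b * x₃ ^ k) := by
  simp [laurentMonomial, unit₁, unit₂]

end IsOreLoc

namespace IsBiQuadRel

variable {K : Type*} [Field K] {q α μ : K} {A : Type*} [Ring A] [Algebra K A] {x₁ x₂ x₃ : A}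
  {B : Type*} [Ring B] [Algebra K B] {ι : A →ₐ[K] B} {y₁ y₂ : B}

theorem biQuadUnitRel (hA : IsBiQuadRel q α μ x₁ x₂ x₃) (hB : IsOreLoc ι x₁ x₂ y₁ y₂) :
    BiQuadUnitRel q α μ hB.unit₁ hB.unit₂ (ι x₃) where
  comm₁₂ := by
    simp only [IsOreLoc.unit₁, IsOreLoc.unit₂, ← map_mul, hA.1, ← Algebra.smul_def, map_smul]
  comm₁₃ := by
    show ι x₃ * ι x₁ = ι x₁ * (ι x₃ + algebraMap K B α)
    rw [← map_mul, hA.2.1, map_mul, map_add, AlgHom.commutes]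
  comm₂₃ := by
    show ι x₃ * ι x₂ = ι x₂ * (ι x₃ + algebraMap K B μ)
    rw [← map_mul, hA.2.2.1, map_mul, map_add, AlgHom.commutes]

theorem linearIndependent (hA : IsBiQuadRel q α μ x₁ x₂ x₃) :
    LinearIndependent K fun v : ℕ × ℕ × ℕ => x₁ ^ v.1 * x₂ ^ v.2.1 * x₃ ^ v.2.2 := by
  rw [linearIndependent_iff]
  intro l hl
  rw [Finsupp.linearCombination_apply] at hl
  exact (hA.2.2.2 0).unique hl.symm (by simp)

theorem linearIndependent_laurentMonomial (hq : q ≠ 0) (hA : IsBiQuadRel q α μ x₁ x₂ x₃)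
    (hB : IsOreLoc ι x₁ x₂ y₁ y₂) :
    LinearIndependent K (laurentMonomial hB.unit₁ hB.unit₂ (ι x₃)) := by
  rw [linearIndependent_iff_finset_linearIndependent]
  intro S
  obtain ⟨⟨N, M⟩, hNM⟩ := (S.image fun v => (-v.1, -v.2.1)).exists_le
  have hbound (v : ℤ × ℤ × ℕ) (hv : v ∈ S) : 0 ≤ N + v.1 ∧ 0 ≤ M + v.2.1 := by
    have := Prod.mk_le_mk.mp (hNM _ (Finset.mem_image_of_mem _ hv))
    omega
  -- multiplying by `x₁ ^ N * x₂ ^ M` moves the monomials indexed by `S` into the image of `A`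
  let shift (v : S) : ℕ × ℕ × ℕ := ((N + v.1.1).toNat, (M + v.1.2.1).toNat, v.1.2.2)
  have shift_injective : Function.Injective shift := by
    rintro ⟨⟨i, j, k⟩, hv⟩ ⟨⟨i', j', k'⟩, hv'⟩ h
    obtain ⟨hi, hj⟩ := hbound _ hv
    obtain ⟨hi', hj'⟩ := hbound _ hv'
    simp only [shift, Prod.mk.injEq] at h hi hj hi' hj'
    ext <;> simp <;> omega
  have hshifted : LinearIndependent K fun v : S =>
      Units.mk0 (q ^ (M * v.1.1)) (zpow_ne_zero _ hq) • ι (x₁ ^ (shift v).1 *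
        x₂ ^ (shift v).2.1 * x₃ ^ (shift v).2.2) :=
    ((hA.linearIndependent.map' ι.toLinearMap (LinearMap.ker_eq_bot.mpr hB.1)).comp _
      shift_injective).units_smul _
  have hmul (v : S) : ((hB.unit₁ ^ N * hB.unit₂ ^ M : Bˣ) : B) *
      laurentMonomial hB.unit₁ hB.unit₂ (ι x₃) v = Units.mk0 (q ^ (M * v.1.1))
        (zpow_ne_zero _ hq) • ι (x₁ ^ (shift v).1 * x₂ ^ (shift v).2.1 * x₃ ^ (shift v).2.2) := by
    obtain ⟨⟨i, j, k⟩, hv⟩ := v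
    obtain ⟨hi, hj⟩ := hbound _ hv
    rw [Units.smul_mk0, ← IsOreLoc.laurentMonomial_natCast, Int.toNat_of_nonneg hi,
      Int.toNat_of_nonneg hj, laurentMonomial, ← mul_assoc,
      (hA.biQuadUnitRel hB).units_mul_units hq, smul_mul_assoc]
    rfl
  refine .of_comp (LinearMap.mulLeft K ((hB.unit₁ ^ N * hB.unit₂ ^ M : Bˣ) : B)) ?_
  simpa only [Function.comp_def, LinearMap.mulLeft_apply, hmul] using hshifted

theorem span_laurentMonomial_eq_top (hq : q ≠ 0) (hA : IsBiQuadRel q α μ x₁ x₂ x₃)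
    (hB : IsOreLoc ι x₁ x₂ y₁ y₂) :
    Submodule.span K (Set.range (laurentMonomial hB.unit₁ hB.unit₂ (ι x₃))) = ⊤ := by
  set P := Submodule.span K (Set.range (laurentMonomial hB.unit₁ hB.unit₂ (ι x₃)))
  have mem (v : ℤ × ℤ × ℕ) : laurentMonomial hB.unit₁ hB.unit₂ (ι x₃) v ∈ P :=
    Submodule.subset_span ⟨v, rfl⟩
  have mul_le : P * P ≤ P := by
    rw [Submodule.span_mul_span, Submodule.span_le]
    rintro _ ⟨_, ⟨⟨i, j, k⟩, rfl⟩, _, ⟨⟨i', j', k'⟩, rfl⟩, rfl⟩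
    dsimp only
    rw [SetLike.mem_coe, (hA.biQuadUnitRel hB).laurentMonomial_mul hq, units_mul_aeval]
    exact P.smul_mem _ (P.sum_mem fun n _ => P.smul_mem _ (mem _))
  have map_mem (a : A) : ι a ∈ P := by
    obtain ⟨f, rfl, -⟩ := hA.2.2.2 a
    rw [map_finsuppSum]
    refine P.sum_mem fun ⟨i, j, k⟩ _ => ?_
    dsimp only
    rw [map_smul, ← hB.laurentMonomial_natCast]
    exact P.smul_mem _ (mem _)
  refine eq_top_iff.mpr fun b _ => ?_
  obtain ⟨a, i, j, hab⟩ := hB.2.2.2.2.2 b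
  have hb : b = ι a * laurentMonomial hB.unit₁ hB.unit₂ (ι x₃) (0, -j, 0) *
      laurentMonomial hB.unit₁ hB.unit₂ (ι x₃) (-i, 0, 0) := by
    have hunits : ι (x₁ ^ i * x₂ ^ j) = ((hB.unit₁ ^ (i : ℤ) * hB.unit₂ ^ (j : ℤ) : Bˣ) : B) := by
      simp [IsOreLoc.unit₁, IsOreLoc.unit₂]
    rw [← hab, hunits, mul_assoc, mul_assoc]
    simp only [laurentMonomial, pow_zero, mul_one, zpow_zero, one_mul, ← Units.val_mul]
    rw [zpow_neg, zpow_neg, ← mul_inv_rev, mul_inv_cancel, Units.val_one, mul_one]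
  rw [hb]
  exact mul_le (Submodule.mul_mem_mul (mul_le (Submodule.mul_mem_mul (map_mem a) (mem _)))
    (mem _))

theorem isLaurentPBW (hq : q ≠ 0) (hA : IsBiQuadRel q α μ x₁ x₂ x₃)
    (hB : IsOreLoc ι x₁ x₂ y₁ y₂) : IsLaurentPBW q α μ hB.unit₁ hB.unit₂ (ι x₃) where
  toBiQuadUnitRel := hA.biQuadUnitRel hB
  linearIndependent := hA.linearIndependent_laurentMonomial hq hB
  span_eq_top := hA.span_laurentMonomial_eq_top hq hB

end IsBiQuadRel

namespace IsLaurentPBW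

variable {K : Type*} [Field K] {q α μ : K} {R : Type*} [Ring R] [Algebra K R]
  {C : Type*} [Ring C] [Algebra K C] {w₁ w₂ : Rˣ} {s : R} {v₁ v₂ : Cˣ} {r : C}

theorem exists_algEquiv_swap (hq : q ≠ 0) (h : IsLaurentPBW q α μ w₁ w₂ s)
    (h' : IsLaurentPBW q⁻¹ μ α v₁ v₂ r) :
    ∃ φ : R ≃ₐ[K] C, φ w₁ = v₂ ∧ φ w₂ = v₁ ∧ φ s = r := by
  have hC : BiQuadUnitRel q α μ v₂ v₁ r := inv_inv q ▸ h'.swap (inv_ne_zero hq)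
  have hR : BiQuadUnitRel q⁻¹ μ α w₂ w₁ s := h.swap hq
  refine ⟨AlgEquiv.ofAlgHom (h.lift hq hC) (h'.lift (inv_ne_zero hq) hR)
    (h'.algHom_ext ?_ ?_ ?_) (h.algHom_ext ?_ ?_ ?_), ?_⟩ <;>
  simp [lift_units₁, lift_units₂, lift_self]

theorem exists_algEquiv_inv₁ (hq : q ≠ 0) (h : IsLaurentPBW q α μ w₁ w₂ s)
    (h' : IsLaurentPBW q⁻¹ (-α) μ v₁ v₂ r) :
    ∃ ψ : R ≃ₐ[K] C, ψ w₁ = ↑v₁⁻¹ ∧ ψ w₂ = v₂ ∧ ψ s = r := by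
  have hC : BiQuadUnitRel q α μ v₁⁻¹ v₂ r := by
    simpa using h'.inv₁ (inv_ne_zero hq)
  have hR : BiQuadUnitRel q⁻¹ (-α) μ w₁⁻¹ w₂ s := h.inv₁ hq
  refine ⟨AlgEquiv.ofAlgHom (h.lift hq hC) (h'.lift (inv_ne_zero hq) hR)
    (h'.algHom_ext ?_ ?_ ?_) (h.algHom_ext ?_ ?_ ?_), ?_⟩ <;>
  simp [lift_units₁, lift_units₁_inv, lift_units₂, lift_self]

end IsLaurentPBW

theorem statement7_general {K : Type*} [Field K] (q α μ : K)
    (hq0 : q ≠ 0)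
    -- the algebra `A(q,α,μ)` and its localization `B`
    {A : Type*} [Ring A] [Algebra K A] (x₁ x₂ x₃ : A)
    (hA : IsBiQuadRel q α μ x₁ x₂ x₃)
    {B : Type*} [Ring B] [Algebra K B] (ι : A →ₐ[K] B) (y₁ y₂ : B)
    (hB : IsOreLoc ι x₁ x₂ y₁ y₂)
    -- the algebra `A(q⁻¹,μ,α)` and its localization `B'`
    {A' : Type*} [Ring A'] [Algebra K A'] (x₁' x₂' x₃' : A')
    (hA' : IsBiQuadRel q⁻¹ μ α x₁' x₂' x₃')
    {B' : Type*} [Ring B'] [Algebra K B'] (ι' : A' →ₐ[K] B') (y₁' y₂' : B')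
    (hB' : IsOreLoc ι' x₁' x₂' y₁' y₂')
    -- the algebra `A(q⁻¹,-α,μ)` and its localization `B''`
    {A'' : Type*} [Ring A''] [Algebra K A''] (x₁'' x₂'' x₃'' : A'')
    (hA'' : IsBiQuadRel q⁻¹ (-α) μ x₁'' x₂'' x₃'')
    {B'' : Type*} [Ring B''] [Algebra K B''] (ι'' : A'' →ₐ[K] B'') (y₁'' y₂'' : B'')
    (hB'' : IsOreLoc ι'' x₁'' x₂'' y₁'' y₂'') :
    (∃ φ : B ≃ₐ[K] B',
      φ (ι x₁) = ι' x₂' ∧ φ (ι x₂) = ι' x₁' ∧ φ (ι x₃) = ι' x₃')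
    ∧ (∃ ψ : B ≃ₐ[K] B'',
      ψ (ι x₁) = y₁'' ∧ ψ (ι x₂) = ι'' x₂'' ∧ ψ (ι x₃) = ι'' x₃'') := by
  have hL := hA.isLaurentPBW hq0 hB
  exact ⟨hL.exists_algEquiv_swap hq0 (hA'.isLaurentPBW (inv_ne_zero hq0) hB'),
    hL.exists_algEquiv_inv₁ hq0 (hA''.isLaurentPBW (inv_ne_zero hq0) hB'')⟩

theorem statement7 {K : Type*} [Field K] (q α μ : K)
    (hq0 : q ≠ 0) (hq1 : q ≠ 1) (hαμ : α + μ ≠ 0)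
    -- the algebra `A(q,α,μ)` and its localization `B`
    {A : Type*} [Ring A] [Algebra K A] (x₁ x₂ x₃ : A)
    (hA : IsBiQuadRel q α μ x₁ x₂ x₃)
    {B : Type*} [Ring B] [Algebra K B] (ι : A →ₐ[K] B) (y₁ y₂ : B)
    (hB : IsOreLoc ι x₁ x₂ y₁ y₂)
    -- the algebra `A(q⁻¹,μ,α)` and its localization `B'`
    {A' : Type*} [Ring A'] [Algebra K A'] (x₁' x₂' x₃' : A')
    (hA' : IsBiQuadRel q⁻¹ μ α x₁' x₂' x₃')
    {B' : Type*} [Ring B'] [Algebra K B'] (ι' : A' →ₐ[K] B') (y₁' y₂' : B')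
    (hB' : IsOreLoc ι' x₁' x₂' y₁' y₂')
    -- the algebra `A(q⁻¹,-α,μ)` and its localization `B''`
    {A'' : Type*} [Ring A''] [Algebra K A''] (x₁'' x₂'' x₃'' : A'')
    (hA'' : IsBiQuadRel q⁻¹ (-α) μ x₁'' x₂'' x₃'')
    {B'' : Type*} [Ring B''] [Algebra K B''] (ι'' : A'' →ₐ[K] B'') (y₁'' y₂'' : B'')
    (hB'' : IsOreLoc ι'' x₁'' x₂'' y₁'' y₂'') :
    (∃ φ : B ≃ₐ[K] B',
      φ (ι x₁) = ι' x₂' ∧ φ (ι x₂) = ι' x₁' ∧ φ (ι x₃) = ι' x₃')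
    ∧ (∃ ψ : B ≃ₐ[K] B'',
      ψ (ι x₁) = y₁'' ∧ ψ (ι x₂) = ι'' x₂'' ∧ ψ (ι x₃) = ι'' x₃'') :=
  statement7_general q α μ hq0 x₁ x₂ x₃ hA ι y₁ y₂ hB x₁' x₂' x₃' hA' ι' y₁' y₂' hB' x₁'' x₂'' x₃''
    hA'' ι'' y₁'' y₂'' hB''

end
end

section
/- A nonzero element a of A is a normal element of A (i.e. Aa = aA) if and only if a is an ω-weight vector, that is, there exist λ₁, λ₂, λ₃ ∈ K with ω_{x₁}(a) = λ₁a, ω_{x₂}(a) = λ₂a and x₃a − ax₃ = λ₃a. -/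
noncomputable section

variable {K : Type*} [Field K] {A : Type*} [Ring A] [Algebra K A]

/-- `A = A(q,α,μ)`: the defining relations of the bi-quadratic algebra of class II.1
together with the PBW-basis property
(`{x₁^{β₁} x₂^{β₂} x₃^{i}}` is a `K`-basis of `A`). -/
def IsBiQuad (q α μ : K) (x₁ x₂ x₃ : A) : Prop :=
  q ≠ 0 ∧ q ≠ 1 ∧
  ((α = 1 ∧ μ ≠ -1) ∨ (α = 0 ∧ μ = 1)) ∧
  x₂ * x₁ = algebraMap K A q * (x₁ * x₂) ∧
  x₃ * x₁ = x₁ * (x₃ + algebraMap K A α) ∧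
  x₃ * x₂ = x₂ * (x₃ + algebraMap K A μ) ∧
  ∀ a : A, ∃! f : ℕ × ℕ × ℕ →₀ K,
    a = f.sum fun v c => c • (x₁ ^ v.1 * x₂ ^ v.2.1 * x₃ ^ v.2.2)

/-- `q` is not a root of unity. -/
def NotRootOfUnity (q : K) : Prop := ∀ m : ℕ, 0 < m → q ^ m ≠ 1

/-- membership in the prime subfield `F_p` (when `char K = p > 0`). -/
def InPrimeSubfield (μ : K) : Prop := ∃ k : ℕ, μ = (k : K)

/-- membership in the copy of `ℚ` inside `K` (when `char K = 0`). -/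
def InRatSubfield (μ : K) : Prop := ∃ r : ℚ, μ = (r : K)

def CaseC1 (p : ℕ) (q : K) : Prop := NotRootOfUnity q ∧ p = 0

def CaseC2 (p : ℕ) (q α μ : K) : Prop :=
  NotRootOfUnity q ∧ 0 < p ∧
    ((α = 1 ∧ InPrimeSubfield μ ∧ μ ≠ -1) ∨ (α = 0 ∧ μ = 1))

def CaseC3 (p : ℕ) (q α μ : K) : Prop :=
  NotRootOfUnity q ∧ 0 < p ∧ α = 1 ∧ ¬ InPrimeSubfield μ

def CaseC4 (p n : ℕ) (q α μ : K) : Prop :=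
  0 < n ∧ IsPrimitiveRoot q n ∧ p = 0 ∧ α = 1 ∧ μ = 0

def CaseC5 (p n : ℕ) (q α μ : K) : Prop :=
  0 < n ∧ IsPrimitiveRoot q n ∧ p = 0 ∧ α = 0 ∧ μ = 1

def CaseC6 (p n μ₁ μ₂ : ℕ) (q α μ : K) : Prop :=
  0 < n ∧ IsPrimitiveRoot q n ∧ p = 0 ∧ α = 1 ∧
    0 < μ₁ ∧ 0 < μ₂ ∧ Nat.Coprime μ₁ μ₂ ∧ μ₁ ≠ μ₂ ∧ (μ₂ : K) * μ = -(μ₁ : K)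

def CaseC7a (p n μ₁ μ₂ : ℕ) (q α μ : K) : Prop :=
  0 < n ∧ IsPrimitiveRoot q n ∧ p = 0 ∧ α = 1 ∧
    0 < μ₁ ∧ 0 < μ₂ ∧ Nat.Coprime μ₁ μ₂ ∧ (μ₂ : K) * μ = (μ₁ : K)

def CaseC7b (p n : ℕ) (q α μ : K) : Prop :=
  0 < n ∧ IsPrimitiveRoot q n ∧ p = 0 ∧ α = 1 ∧ ¬ InRatSubfield μ

/-- case (C7): `μ ∉ ℚ_- ∪ {0}` (the union of cases (C7a) and (C7b)). -/
def CaseC7 (p n : ℕ) (q α μ : K) : Prop :=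
  0 < n ∧ IsPrimitiveRoot q n ∧ p = 0 ∧ α = 1 ∧
    ¬ (μ = 0 ∨ ∃ r : ℚ, r < 0 ∧ μ = (r : K))

def CaseC8 (p n : ℕ) (q α μ : K) : Prop :=
  0 < n ∧ IsPrimitiveRoot q n ∧ 0 < p ∧ ¬ p ∣ n ∧ α = 1 ∧ μ = 0

def CaseC9 (p n : ℕ) (q α μ : K) : Prop :=
  0 < n ∧ IsPrimitiveRoot q n ∧ 0 < p ∧ ¬ p ∣ n ∧ α = 0 ∧ μ = 1

def CaseC10 (p n : ℕ) (q α μ : K) : Prop :=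
  0 < n ∧ IsPrimitiveRoot q n ∧ 0 < p ∧ ¬ p ∣ n ∧ α = 1 ∧ ¬ InPrimeSubfield μ

def CaseC11 (p n : ℕ) (q α μ : K) : Prop :=
  0 < n ∧ IsPrimitiveRoot q n ∧ 0 < p ∧ ¬ p ∣ n ∧ α = 1 ∧
    InPrimeSubfield μ ∧ μ ≠ 0 ∧ μ ≠ -1

/-- `f_μ = ∏_{a,b ∈ F_p} (x₃ - a - bμ)`, as an element of `A`. -/
def fmuElt (p : ℕ) (μ : K) (x₃ : A) : A :=
  ((List.range p).map fun (a : ℕ) =>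
    ((List.range p).map fun (b : ℕ) =>
      x₃ - algebraMap K A ((a : K) + (b : K) * μ)).prod).prod

/-!
Grade `A` by `ℕ × ℕ` through the exponents of `x₁, x₂`: by the PBW theorem the component of
degree `(i, j)` is `x₁ ^ i * x₂ ^ j * K[x₃]`, and `f(x₃) * x₁ ^ i * x₂ ^ j` equals
`x₁ ^ i * x₂ ^ j * f(x₃ + iα + jμ)`, so the product of homogeneous elements of degrees `d, d'` is
homogeneous of degree `d + d'`, with polynomial part `q ^ _ • f(x₃ + _) * g(x₃)`. Hence
lexicographically leading degrees add, `A` is a domain, and comparing leading and trailing degrees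
in `x * a = a * c` with `x` homogeneous shows that `c` is homogeneous of the same degree as `x`.
Comparing `x₃`-degrees in the leading components then forces `c = λ • x` for `x = x₁, x₂`, and
`c = x₃ + λ` for `x = x₃`: these are the weight equations. Conversely, the weight equations give
`x * a ∈ a * A` and `a * x ∈ A * a` for the three generators `x`, hence for all of `A`.
-/

open Polynomial

theorem setOf_mul_eq_setOf_mul_iff {M : Type*} [Mul M] (a : M) :
    {y : M | ∃ x, y = x * a} = {y | ∃ x, y = a * x} ↔
      (∀ b, ∃ u, b * a = a * u) ∧ ∀ b, ∃ u, a * b = u * a := by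
  simp only [Set.ext_iff, Set.mem_ofPred_eq]
  refine ⟨fun h => ⟨fun b => (h _).1 ⟨b, rfl⟩, fun b => ?_⟩, fun ⟨hl, hr⟩ y => ⟨?_, ?_⟩⟩
  · obtain ⟨u, hu⟩ := (h _).2 ⟨b, rfl⟩
    exact ⟨u, hu⟩
  · rintro ⟨b, rfl⟩
    exact hl b
  · rintro ⟨b, rfl⟩
    obtain ⟨u, hu⟩ := hr b
    exact ⟨u, hu⟩

theorem exists_mul_eq_mul_of_adjoin_eq_top {s : Set A} (hs : Algebra.adjoin K s = ⊤) {a : A}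
    (h : ∀ x ∈ s, ∃ u, x * a = a * u) (b : A) : ∃ u, b * a = a * u := by
  induction (hs ▸ Algebra.mem_top : b ∈ Algebra.adjoin K s) using Algebra.adjoin_induction with
  | mem x hx => exact h x hx
  | algebraMap r => exact ⟨algebraMap K A r, Algebra.commutes r a⟩
  | add x y _ _ hx hy =>
    obtain ⟨⟨u, hu⟩, ⟨v, hv⟩⟩ := And.intro hx hy
    exact ⟨u + v, by rw [add_mul, mul_add, hu, hv]⟩
  | mul x y _ _ hx hy =>
    obtain ⟨⟨u, hu⟩, ⟨v, hv⟩⟩ := And.intro hx hy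
    exact ⟨u * v, by rw [mul_assoc, hv, ← mul_assoc, hu, mul_assoc]⟩

theorem exists_mul_eq_mul_of_adjoin_eq_top' {s : Set A} (hs : Algebra.adjoin K s = ⊤) {a : A}
    (h : ∀ x ∈ s, ∃ u, a * x = u * a) (b : A) : ∃ u, a * b = u * a := by
  induction (hs ▸ Algebra.mem_top : b ∈ Algebra.adjoin K s) using Algebra.adjoin_induction with
  | mem x hx => exact h x hx
  | algebraMap r => exact ⟨algebraMap K A r, (Algebra.commutes r a).symm⟩
  | add x y _ _ hx hy =>
    obtain ⟨⟨u, hu⟩, ⟨v, hv⟩⟩ := And.intro hx hy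
    exact ⟨u + v, by rw [add_mul, mul_add, hu, hv]⟩
  | mul x y _ _ hx hy =>
    obtain ⟨⟨u, hu⟩, ⟨v, hv⟩⟩ := And.intro hx hy
    exact ⟨u * v, by rw [← mul_assoc, hu, mul_assoc, hv, mul_assoc]⟩

theorem setOf_mul_eq_setOf_mul_of_adjoin_eq_top {s : Set A} (hs : Algebra.adjoin K s = ⊤)
    {a : A} (h : ∀ x ∈ s, (∃ u, x * a = a * u) ∧ ∃ u, a * x = u * a) :
    {y : A | ∃ x, y = x * a} = {y | ∃ x, y = a * x} :=
  (setOf_mul_eq_setOf_mul_iff a).mpr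
    ⟨exists_mul_eq_mul_of_adjoin_eq_top hs fun x hx => (h x hx).1,
      exists_mul_eq_mul_of_adjoin_eq_top' hs fun x hx => (h x hx).2⟩

theorem exists_mul_eq_mul_of_apply_eq_smul {x a : A} {σ : A ≃ₐ[K] A} {l : K}
    (hσ : x * a = σ a * x) (hl : σ a = l • a) (ha : a ≠ 0) :
    (∃ u, x * a = a * u) ∧ ∃ u, a * x = u * a := by
  have hl₀ : l ≠ 0 := by
    rintro rfl
    rw [zero_smul, map_eq_zero_iff σ σ.injective] at hl
    exact ha hl
  exact ⟨⟨l • x, by rw [hσ, hl, smul_mul_assoc, mul_smul_comm]⟩,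
    ⟨l⁻¹ • x, by rw [smul_mul_assoc, hσ, hl, smul_mul_assoc, smul_smul, inv_mul_cancel₀ hl₀,
      one_smul]⟩⟩

theorem exists_mul_eq_mul_of_commutator_eq_smul {x a : A} {l : K} (h : x * a - a * x = l • a) :
    (∃ u, x * a = a * u) ∧ ∃ u, a * x = u * a :=
  ⟨⟨x + algebraMap K A l, by
      rw [mul_add, ← Algebra.commutes, ← Algebra.smul_def, ← h, add_sub_cancel]⟩,
    ⟨x - algebraMap K A l, by rw [sub_mul, ← Algebra.smul_def, ← h, sub_sub_cancel]⟩⟩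

theorem mul_pow_eq_smul_pow_mul {x y : A} {q : K} (h : y * x = q • (x * y)) (i : ℕ) :
    y * x ^ i = q ^ i • (x ^ i * y) := by
  induction i with
  | zero => simp
  | succ i ih =>
    rw [pow_succ, ← mul_assoc, ih, smul_mul_assoc, mul_assoc, h, mul_smul_comm, smul_smul,
      ← mul_assoc, pow_succ]

theorem pow_mul_pow_eq_smul_pow_mul_pow {x y : A} {q : K} (h : y * x = q • (x * y)) (i j : ℕ) :
    y ^ j * x ^ i = q ^ (j * i) • (x ^ i * y ^ j) := by
  induction j with
  | zero => simp
  | succ j ih =>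
    rw [pow_succ, mul_assoc, mul_pow_eq_smul_pow_mul h, mul_smul_comm, ← mul_assoc, ih,
      smul_mul_assoc, smul_smul, mul_assoc, ← pow_succ, ← pow_add, add_comm i, add_one_mul]

theorem aeval_mul_eq_mul_aeval_comp {x y : A} {c : K} (h : y * x = x * (y + algebraMap K A c))
    (p : K[X]) : aeval y p * x = x * aeval y (p.comp (X + C c)) := by
  have hsemi : SemiconjBy x (y + algebraMap K A c) y := h.symm
  rw [aeval_comp, map_add, aeval_X, aeval_C]
  induction p using Polynomial.induction_on' with
  | add p r hp hr => rw [map_add, map_add, add_mul, mul_add, hp, hr]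
  | monomial n r =>
    rw [aeval_monomial, aeval_monomial, mul_assoc, ← (hsemi.pow_right n).eq, ← mul_assoc,
      ← mul_assoc, Algebra.commutes]

theorem aeval_mul_pow_eq_pow_mul_aeval_comp {x y : A} {c : K}
    (h : y * x = x * (y + algebraMap K A c)) (p : K[X]) (i : ℕ) :
    aeval y p * x ^ i = x ^ i * aeval y (p.comp (X + C ((i : K) * c))) := by
  induction i generalizing p with
  | zero => simp
  | succ i ih =>
    rw [pow_succ', ← mul_assoc, aeval_mul_eq_mul_aeval_comp h, mul_assoc, ih, ← mul_assoc,
      comp_assoc, add_comp, X_comp, C_comp, add_assoc, ← C_add]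
    push_cast
    ring_nf

structure BiQuadData (K : Type*) [Field K] (A : Type*) [Ring A] [Algebra K A] where
  (q α μ : K)
  (x₁ x₂ x₃ : A)
  q_ne_zero : q ≠ 0
  x₂_mul_x₁ : x₂ * x₁ = q • (x₁ * x₂)
  x₃_mul_x₁ : x₃ * x₁ = x₁ * (x₃ + algebraMap K A α)
  x₃_mul_x₂ : x₃ * x₂ = x₂ * (x₃ + algebraMap K A μ)
  pbw : ∀ a : A, ∃! f : ℕ × ℕ × ℕ →₀ K,
    a = f.sum fun v c => c • (x₁ ^ v.1 * x₂ ^ v.2.1 * x₃ ^ v.2.2)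

namespace BiQuadData

variable (S : BiQuadData K A)

def pbwMonomial (v : ℕ × ℕ × ℕ) : A := S.x₁ ^ v.1 * S.x₂ ^ v.2.1 * S.x₃ ^ v.2.2

theorem bijective_linearCombination_pbwMonomial :
    Function.Bijective (Finsupp.linearCombination K S.pbwMonomial) := by
  refine ⟨fun f g hfg => ?_, fun a => ?_⟩
  · obtain ⟨_, -, huniq⟩ := S.pbw (Finsupp.linearCombination K S.pbwMonomial f)
    rw [huniq f (Finsupp.linearCombination_apply K f),
      huniq g (hfg ▸ Finsupp.linearCombination_apply K g)]
  · obtain ⟨f, hf, -⟩ := S.pbw a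
    exact ⟨f, (Finsupp.linearCombination_apply K f).trans hf.symm⟩

def pbwBasis : Module.Basis (ℕ × ℕ × ℕ) K A :=
  .ofRepr (LinearEquiv.ofBijective _ S.bijective_linearCombination_pbwMonomial).symm

theorem pbwBasis_apply (v : ℕ × ℕ × ℕ) : S.pbwBasis v = S.pbwMonomial v := by
  simp [pbwBasis, Module.Basis.coe_ofRepr]

/-- `S.coord a (i, j) = f` says that the component of `a` of degree `(i, j)` is
`x₁ ^ i * x₂ ^ j * f(x₃)`. -/
def coord : A ≃ₗ[K] (ℕ × ℕ →₀ K[X]) :=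
  S.pbwBasis.equiv (Finsupp.basis fun _ => basisMonomials K)
    ((Equiv.prodAssoc ℕ ℕ ℕ).symm.trans (Equiv.sigmaEquivProd _ _).symm)

def homog (d : ℕ × ℕ) (p : K[X]) : A := S.x₁ ^ d.1 * S.x₂ ^ d.2 * aeval S.x₃ p

theorem coord_symm_single (d : ℕ × ℕ) (p : K[X]) :
    S.coord.symm (Finsupp.single d p) = S.homog d p := by
  induction p using Polynomial.induction_on' with
  | add p r hp hr =>
    rw [Finsupp.single_add, map_add, hp, hr, homog, homog, homog, map_add, mul_add]
  | monomial n c =>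
    have hsingle : Finsupp.single d (monomial n c) =
        c • (Finsupp.basis fun _ : ℕ × ℕ => basisMonomials K) ⟨d, n⟩ := by
      simp [Finsupp.coe_basis, coe_basisMonomials, smul_monomial]
    rw [hsingle, map_smul, coord, Module.Basis.equiv_symm, Module.Basis.equiv_apply,
      pbwBasis_apply]
    simp [homog, pbwMonomial, aeval_monomial, Algebra.smul_def, Algebra.commutes c, mul_assoc]

theorem coord_homog (d : ℕ × ℕ) (p : K[X]) : S.coord (S.homog d p) = Finsupp.single d p := by
  rw [← coord_symm_single, LinearEquiv.apply_symm_apply]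

theorem sum_homog_coord (a : A) : (S.coord a).sum S.homog = a := by
  conv_rhs => rw [← S.coord.symm_apply_apply a, ← (S.coord a).sum_single]
  rw [map_finsuppSum]
  simp only [coord_symm_single]

theorem support_coord_nonempty {a : A} (ha : a ≠ 0) : (S.coord a).support.Nonempty :=
  Finsupp.support_nonempty_iff.mpr (S.coord.map_ne_zero_iff.mpr ha)

theorem homog_ne_zero {d : ℕ × ℕ} {p : K[X]} (hp : p ≠ 0) : S.homog d p ≠ 0 := by
  rw [← S.coord_symm_single]
  simpa using hp

theorem homog_C (d : ℕ × ℕ) (l : K) : S.homog d (C l) = l • S.homog d 1 := by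
  simp [homog, Algebra.smul_def, Algebra.commutes]

theorem homog_x₁ : S.homog (1, 0) 1 = S.x₁ := by simp [homog]

theorem homog_x₂ : S.homog (0, 1) 1 = S.x₂ := by simp [homog]

theorem homog_x₃ : S.homog 0 X = S.x₃ := by simp [homog]

theorem adjoin_eq_top : Algebra.adjoin K {S.x₁, S.x₂, S.x₃} = ⊤ := by
  refine eq_top_iff.mpr fun a _ => ?_
  rw [← S.sum_homog_coord a]
  refine Subalgebra.sum_mem _ fun d _ => ?_
  have hx₃ : aeval S.x₃ (S.coord a d) ∈ Algebra.adjoin K {S.x₁, S.x₂, S.x₃} :=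
    Algebra.adjoin_mono (by simp) (aeval_mem_adjoin_singleton K _)
  exact mul_mem (mul_mem (pow_mem (Algebra.subset_adjoin (by simp)) _)
    (pow_mem (Algebra.subset_adjoin (by simp)) _)) hx₃

def shift (d : ℕ × ℕ) : K := d.1 * S.α + d.2 * S.μ

theorem homog_mul_homog (d d' : ℕ × ℕ) (p p' : K[X]) :
    S.homog d p * S.homog d' p' =
      S.q ^ (d.2 * d'.1) • S.homog (d + d') (p.comp (X + C (S.shift d')) * p') := by
  have hx₁ := aeval_mul_pow_eq_pow_mul_aeval_comp S.x₃_mul_x₁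
  have hx₂ := aeval_mul_pow_eq_pow_mul_aeval_comp S.x₃_mul_x₂
  calc S.homog d p * S.homog d' p'
      = S.x₁ ^ d.1 * (S.x₂ ^ d.2 * S.x₁ ^ d'.1) *
          (aeval S.x₃ (p.comp (X + C (d'.1 * S.α))) * S.x₂ ^ d'.2) * aeval S.x₃ p' := by
        simp only [homog, mul_assoc]
        rw [← mul_assoc (aeval S.x₃ p), hx₁]
        simp only [mul_assoc]
    _ = S.q ^ (d.2 * d'.1) • S.homog (d + d') (p.comp (X + C (S.shift d')) * p') := by
        rw [pow_mul_pow_eq_smul_pow_mul_pow S.x₂_mul_x₁, hx₂, comp_assoc, add_comp, X_comp,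
          C_comp, add_assoc, ← C_add]
        simp only [homog, shift, map_mul, Prod.fst_add, Prod.snd_add, pow_add, smul_mul_assoc,
          mul_smul_comm, mul_assoc, add_comm]

theorem coord_mul_apply (a c : A) (d : ℕ × ℕ) :
    S.coord (a * c) d = ∑ d₁ ∈ (S.coord a).support, ∑ d₂ ∈ (S.coord c).support,
      if d₁ + d₂ = d then
        S.q ^ (d₁.2 * d₂.1) • ((S.coord a d₁).comp (X + C (S.shift d₂)) * S.coord c d₂)
      else 0 := by
  conv_lhs => rw [← S.sum_homog_coord a, ← S.sum_homog_coord c]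
  simp only [Finsupp.sum, Finset.sum_mul, Finset.mul_sum, homog_mul_homog, map_sum, map_smul,
    coord_homog, Finsupp.finsetSum_apply, Finsupp.smul_apply, Finsupp.single_apply, smul_ite,
    smul_zero]
  exact Finset.sum_comm

theorem mem_support_coord_mul {a c : A} {d : ℕ × ℕ} (hd : d ∈ (S.coord (a * c)).support) :
    ∃ d₁ ∈ (S.coord a).support, ∃ d₂ ∈ (S.coord c).support, d₁ + d₂ = d := by
  by_contra! h
  rw [Finsupp.mem_support_iff, coord_mul_apply] at hd
  exact hd (Finset.sum_eq_zero fun d₁ hd₁ =>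
    Finset.sum_eq_zero fun d₂ hd₂ => if_neg (h d₁ hd₁ d₂ hd₂))

theorem coord_mul_apply_add {a c : A} {e d : ℕ × ℕ}
    (h : ∀ d₁ ∈ (S.coord a).support, ∀ d₂ ∈ (S.coord c).support,
      d₁ + d₂ = e + d → d₁ = e ∧ d₂ = d) :
    S.coord (a * c) (e + d) =
      S.q ^ (e.2 * d.1) • ((S.coord a e).comp (X + C (S.shift d)) * S.coord c d) := by
  rw [coord_mul_apply, Finset.sum_eq_single e (fun d₁ hd₁ hne => ?_) (fun he => ?_),
    Finset.sum_eq_single d (fun d₂ _ hne => if_neg fun hsum => hne (add_left_cancel hsum))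
      (fun hd => ?_), if_pos rfl]
  · rw [Finsupp.notMem_support_iff.mp hd, mul_zero, smul_zero, ite_self]
  · exact Finset.sum_eq_zero fun d₂ hd₂ => if_neg fun hsum => hne (h d₁ hd₁ d₂ hd₂ hsum).1
  · simp [Finsupp.notMem_support_iff.mp he]

section LeadingDeg

variable {M : Type*} [AddCommMonoid M] [LinearOrder M] {φ : ℕ × ℕ →+ M}

variable (φ) in
def IsLeadingDeg (a : A) (e : ℕ × ℕ) : Prop :=
  e ∈ (S.coord a).support ∧ ∀ d ∈ (S.coord a).support, φ d ≤ φ e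

variable (φ) in
theorem exists_isLeadingDeg {a : A} (ha : a ≠ 0) : ∃ e, S.IsLeadingDeg φ a e := by
  obtain ⟨e, he, hmax⟩ := Finset.exists_max_image _ φ (S.support_coord_nonempty ha)
  exact ⟨e, he, hmax⟩

variable (φ) in
theorem isLeadingDeg_homog (d : ℕ × ℕ) {p : K[X]} (hp : p ≠ 0) :
    S.IsLeadingDeg φ (S.homog d p) d := by
  refine ⟨by simpa [coord_homog] using hp, fun d' hd' => ?_⟩
  rw [coord_homog, Finsupp.mem_support_single] at hd'
  rw [hd'.1]

variable {S}

theorem IsLeadingDeg.eq (hφ : Function.Injective φ) {a : A} {e e' : ℕ × ℕ}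
    (h : S.IsLeadingDeg φ a e) (h' : S.IsLeadingDeg φ a e') : e = e' :=
  hφ (le_antisymm (h'.2 e h.1) (h.2 e' h'.1))

theorem IsLeadingDeg.mul [IsOrderedCancelAddMonoid M] (hφ : Function.Injective φ) {a c : A}
    {e d : ℕ × ℕ} (ha : S.IsLeadingDeg φ a e) (hc : S.IsLeadingDeg φ c d) :
    S.IsLeadingDeg φ (a * c) (e + d) := by
  have hunique : ∀ d₁ ∈ (S.coord a).support, ∀ d₂ ∈ (S.coord c).support,
      d₁ + d₂ = e + d → d₁ = e ∧ d₂ = d := by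
    intro d₁ hd₁ d₂ hd₂ hsum
    have := (add_eq_add_iff_eq_and_eq (ha.2 d₁ hd₁) (hc.2 d₂ hd₂)).mp
      (by rw [← map_add, ← map_add, hsum])
    exact ⟨hφ this.1, hφ this.2⟩
  refine ⟨?_, fun d'' hd'' => ?_⟩
  · rw [Finsupp.mem_support_iff, S.coord_mul_apply_add hunique]
    exact smul_ne_zero (pow_ne_zero _ S.q_ne_zero) (mul_ne_zero
      (comp_X_add_C_ne_zero_iff.mpr (Finsupp.mem_support_iff.mp ha.1))
      (Finsupp.mem_support_iff.mp hc.1))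
  · obtain ⟨d₁, hd₁, d₂, hd₂, rfl⟩ := S.mem_support_coord_mul hd''
    rw [map_add, map_add]
    exact add_le_add (ha.2 d₁ hd₁) (hc.2 d₂ hd₂)

end LeadingDeg

theorem noZeroDivisors (S : BiQuadData K A) : NoZeroDivisors A := by
  refine ⟨fun {a c} hac => ?_⟩
  by_contra! h
  obtain ⟨e, he⟩ := S.exists_isLeadingDeg (toLexAddEquiv (ℕ × ℕ)).toAddMonoidHom h.1
  obtain ⟨d, hd⟩ := S.exists_isLeadingDeg (toLexAddEquiv (ℕ × ℕ)).toAddMonoidHom h.2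
  have := (he.mul (toLexAddEquiv _).injective hd).1
  simp [hac] at this

theorem le_of_homog_mul_eq {M : Type*} [AddCommMonoid M] [LinearOrder M]
    [IsOrderedCancelAddMonoid M] {φ : ℕ × ℕ →+ M} (hφ : Function.Injective φ) {a c : A}
    {d₀ : ℕ × ℕ} {p₀ : K[X]} (ha : a ≠ 0) (hp₀ : p₀ ≠ 0) (h : S.homog d₀ p₀ * a = a * c) :
    ∀ d ∈ (S.coord c).support, φ d ≤ φ d₀ := by
  have := S.noZeroDivisors
  have hc : c ≠ 0 := by
    rintro rfl
    simp [S.homog_ne_zero hp₀, ha] at h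
  obtain ⟨e, he⟩ := S.exists_isLeadingDeg φ ha
  obtain ⟨d, hd⟩ := S.exists_isLeadingDeg φ hc
  have hd₀ : d₀ + e = e + d :=
    ((S.isLeadingDeg_homog φ d₀ hp₀).mul hφ he).eq hφ (h ▸ he.mul hφ hd)
  rw [add_comm, add_right_inj] at hd₀
  exact hd₀ ▸ hd.2

theorem eq_homog_of_homog_mul_eq {a c : A} {d₀ : ℕ × ℕ} {p₀ : K[X]} (ha : a ≠ 0)
    (hp₀ : p₀ ≠ 0) (h : S.homog d₀ p₀ * a = a * c) : c = S.homog d₀ (S.coord c d₀) := by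
  -- leading for the reversed lexicographic order means lexicographically trailing
  let toLexDual : ℕ × ℕ →+ (ℕ ×ₗ ℕ)ᵒᵈ :=
    { toFun := fun d => OrderDual.toDual (toLex d), map_zero' := rfl, map_add' := fun _ _ => rfl }
  have hsupp : (S.coord c).support ⊆ {d₀} := fun d hd =>
    Finset.mem_singleton.mpr <| toLex.injective <| le_antisymm
      (S.le_of_homog_mul_eq (φ := (toLexAddEquiv (ℕ × ℕ)).toAddMonoidHom)
        (toLexAddEquiv _).injective ha hp₀ h d hd)
      (S.le_of_homog_mul_eq (φ := toLexDual) (toLex.injective.comp OrderDual.toDual.injective)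
        ha hp₀ h d hd)
  rw [← S.coord_symm_single, ← Finsupp.support_subset_singleton.mp hsupp,
    LinearEquiv.symm_apply_apply]

theorem coord_homog_mul_eq_mul_homog {a : A} {d₀ : ℕ × ℕ} {p₀ p : K[X]}
    (h : S.homog d₀ p₀ * a = a * S.homog d₀ p) (e : ℕ × ℕ) :
    S.q ^ (d₀.2 * e.1) • (p₀.comp (X + C (S.shift e)) * S.coord a e) =
      S.q ^ (e.2 * d₀.1) • ((S.coord a e).comp (X + C (S.shift d₀)) * p) := by
  have hsupp : ∀ p', (S.coord (S.homog d₀ p')).support ⊆ {d₀} := fun p' => by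
    rw [coord_homog]
    exact Finsupp.support_single_subset
  have := congrArg (S.coord · (d₀ + e)) h
  rw [S.coord_mul_apply_add fun d₁ hd₁ d₂ _ hsum => ?_, add_comm d₀ e,
    S.coord_mul_apply_add fun d₁ _ d₂ hd₂ hsum => ?_] at this
  · simpa [coord_homog] using this
  · obtain rfl := Finset.mem_singleton.mp (hsupp p hd₂)
    exact ⟨add_right_cancel hsum, rfl⟩
  · obtain rfl := Finset.mem_singleton.mp (hsupp p₀ hd₁)
    exact ⟨rfl, add_left_cancel hsum⟩

theorem exists_eq_smul_of_homog_one_mul_eq {a c : A} {d₀ : ℕ × ℕ} (ha : a ≠ 0)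
    (h : S.homog d₀ 1 * a = a * c) : ∃ l : K, c = l • S.homog d₀ 1 := by
  have hc := S.eq_homog_of_homog_mul_eq ha one_ne_zero h
  set p := S.coord c d₀
  rw [hc] at h
  obtain ⟨e, he⟩ := S.support_coord_nonempty ha
  have hf := Finsupp.mem_support_iff.mp he
  have hq := S.q_ne_zero
  have heq := S.coord_homog_mul_eq_mul_homog h e
  rw [one_comp, one_mul] at heq
  have hp : p ≠ 0 := by
    rintro hp
    simp [hp, hf, hq] at heq
  have hdeg := congrArg natDegree heq
  rw [natDegree_smul _ (pow_ne_zero _ hq), natDegree_smul _ (pow_ne_zero _ hq),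
    natDegree_mul (comp_X_add_C_ne_zero_iff.mpr hf) hp, natDegree_comp, natDegree_X_add_C,
    mul_one, left_eq_add] at hdeg
  exact ⟨p.coeff 0, by rw [hc, ← homog_C, ← eq_C_of_natDegree_eq_zero hdeg]⟩

theorem exists_apply_eq_smul_of_mul_eq {x a c : A} {d₀ : ℕ × ℕ} {σ : A → A}
    (hσ : x * a = σ a * x) (hx : S.homog d₀ 1 = x) (ha : a ≠ 0) (h : x * a = a * c) :
    ∃ l : K, σ a = l • a := by
  have := S.noZeroDivisors
  subst hx
  obtain ⟨l, rfl⟩ := S.exists_eq_smul_of_homog_one_mul_eq ha h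
  have hzero : (σ a - l • a) * S.homog d₀ 1 = 0 := by
    rw [sub_mul, ← hσ, h, smul_mul_assoc, mul_smul_comm, sub_self]
  exact ⟨l, sub_eq_zero.mp ((mul_eq_zero.mp hzero).resolve_right (S.homog_ne_zero one_ne_zero))⟩

theorem exists_commutator_eq_smul_of_mul_eq {a c : A} (ha : a ≠ 0) (h : S.x₃ * a = a * c) :
    ∃ l : K, S.x₃ * a - a * S.x₃ = l • a := by
  rw [← S.homog_x₃] at h ⊢
  have hc := S.eq_homog_of_homog_mul_eq ha X_ne_zero h
  set p := S.coord c 0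
  rw [hc] at h
  obtain ⟨e, he⟩ := S.support_coord_nonempty ha
  have heq := S.coord_homog_mul_eq_mul_homog h e
  simp only [shift, Prod.fst_zero, Prod.snd_zero, Nat.cast_zero, zero_mul, add_zero, mul_zero,
    pow_zero, one_smul, C_0, comp_X, X_comp] at heq
  have hp : p = X + C (S.shift e) :=
    mul_left_cancel₀ (Finsupp.mem_support_iff.mp he) (heq.symm.trans (mul_comm _ _))
  refine ⟨S.shift e, ?_⟩
  rw [h, hp, ← mul_sub, homog, homog]
  simp [Algebra.smul_def, Algebra.commutes]

end BiQuadData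

theorem statement19 (q α μ : K) (x₁ x₂ x₃ : A)
    (hbq : IsBiQuad q α μ x₁ x₂ x₃)
    (σ₁ σ₂ : A ≃ₐ[K] A)
    (hσ₁ : ∀ r : A, x₁ * r = σ₁ r * x₁)
    (hσ₂ : ∀ r : A, x₂ * r = σ₂ r * x₂) :
    ∀ a : A, a ≠ 0 →
      (({y : A | ∃ x : A, y = x * a} = {y : A | ∃ x : A, y = a * x}) ↔
        ∃ l₁ l₂ l₃ : K,
          σ₁ a = l₁ • a ∧ σ₂ a = l₂ • a ∧ x₃ * a - a * x₃ = l₃ • a) := by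
  obtain ⟨hq, -, -, h₂₁, h₃₁, h₃₂, pbw⟩ := hbq
  let S : BiQuadData K A :=
    ⟨q, α, μ, x₁, x₂, x₃, hq, by rw [h₂₁, Algebra.smul_def], h₃₁, h₃₂, pbw⟩
  intro a ha
  constructor
  · intro hnormal
    have hleft := ((setOf_mul_eq_setOf_mul_iff a).mp hnormal).1
    obtain ⟨c₁, hc₁⟩ := hleft x₁
    obtain ⟨c₂, hc₂⟩ := hleft x₂
    obtain ⟨c₃, hc₃⟩ := hleft x₃
    obtain ⟨l₁, hl₁⟩ := S.exists_apply_eq_smul_of_mul_eq (hσ₁ a) S.homog_x₁ ha hc₁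
    obtain ⟨l₂, hl₂⟩ := S.exists_apply_eq_smul_of_mul_eq (hσ₂ a) S.homog_x₂ ha hc₂
    obtain ⟨l₃, hl₃⟩ := S.exists_commutator_eq_smul_of_mul_eq ha hc₃
    exact ⟨l₁, l₂, l₃, hl₁, hl₂, hl₃⟩
  · rintro ⟨l₁, l₂, l₃, h₁, h₂, h₃⟩
    refine setOf_mul_eq_setOf_mul_of_adjoin_eq_top S.adjoin_eq_top ?_
    rintro x (rfl | rfl | rfl)
    exacts [exists_mul_eq_mul_of_apply_eq_smul (hσ₁ a) h₁ ha,
      exists_mul_eq_mul_of_apply_eq_smul (hσ₂ a) h₂ ha,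
      exists_mul_eq_mul_of_commutator_eq_smul h₃]

end
end
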